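/- (Full Transitive Lookup Total; lem:trans-full) For every typing environment Γ, qualifier q, and natural number n, if n ≥ |Γ| (the length of Γ), then qtransⁿ_Γ(q) = qtrans^{|Γ|}_Γ(q); i.e., the fuel-indexed transitive lookup stabilizes after |Γ| steps, so the full transitive lookup qtrans_Γ(q) := qtrans^{|Γ|}_Γ(q) is a fixed point of further iteration. -/
import Mathlib


/-- Variables are natural numbers (a fixed type with decidable equality). -/
abbrev Var := ℕ

/-- A qualifier is a finite set of variables. -/
abbrev Qual := Finset Var

/-- A typing environment is a finite list of bindings of a variable to a qualifier. -/
abbrev Env := List (Var × Qual)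

/-- Cardinality of a qualifier `q` w.r.t. `Γ`: counts the bindings of `Γ`
whose bound variable lies in `q`. -/
def card (Γ : Env) (q : Qual) : ℕ :=
  match Γ with
  | [] => 0
  | (x, _) :: Γ' => if x ∈ q then 1 + card Γ' q else card Γ' q

/-- One-step reachability: `Γ ⊢ x ↝ y` iff some binding `(x, p) ∈ Γ` has `y ∈ p`. -/
def reaches (Γ : Env) (x y : Var) : Prop :=
  ∃ p : Qual, (x, p) ∈ Γ ∧ y ∈ p

/-- Transitive reachability `Γ ⊢ x ↝* y`: the transitive closure of `reaches`. -/
inductive reachesStar (Γ : Env) : Var → Var → Prop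
  | base {x y : Var} : reaches Γ x y → reachesStar Γ x y
  | step {x z y : Var} : reaches Γ x z → reachesStar Γ z y → reachesStar Γ x y

/-- One-step expansion: `step_Γ(q) = q ∪ ⋃_{x ∈ q} { y | Γ ⊢ x ↝ y }`. -/
def stepQ (Γ : Env) (q : Qual) : Qual :=
  q ∪ Γ.toFinset.biUnion (fun b => if b.1 ∈ q then b.2 else ∅)

/-- Fuel-indexed transitive lookup. -/
def qtransN (Γ : Env) : ℕ → Qual → Qual
  | 0, q => q
  | n + 1, q => qtransN Γ n (stepQ Γ q)

/-- Full transitive lookup: iterate `|Γ|` times. -/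
def qtrans (Γ : Env) (q : Qual) : Qual := qtransN Γ Γ.length q

/-- Propositional saturation: `⋃_{x ∈ q} { y | Γ ⊢ x ↝* y } ⊆ q`. -/
def psat (Γ : Env) (q : Qual) : Prop :=
  ∀ x ∈ q, ∀ y : Var, reachesStar Γ x y → y ∈ q

lemma card_mono (Γ : Env) {q r : Qual} (h : q ⊆ r) : card Γ q ≤ card Γ r := by
  induction Γ with
  | nil => simp [card]
  | cons b Γ' ih =>
    obtain ⟨x, s⟩ := b
    simp only [card]
    by_cases hx : x ∈ q
    · simp [hx, h hx]; omega
    · by_cases hx' : x ∈ r <;> simp [hx, hx'] <;> omega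

lemma card_le_length (Γ : Env) (q : Qual) : card Γ q ≤ Γ.length := by
  induction Γ with
  | nil => simp [card]
  | cons b Γ' ih =>
    obtain ⟨x, s⟩ := b
    simp only [card, List.length_cons]
    by_cases hx : x ∈ q <;> simp [hx] <;> omega

lemma subset_stepQ (Γ : Env) (q : Qual) : q ⊆ stepQ Γ q :=
  Finset.subset_union_left

lemma mem_of_card_le (Γ : Env) {q r : Qual} (hqr : q ⊆ r) (h : card Γ r ≤ card Γ q) :
    ∀ x p, (x, p) ∈ Γ → x ∈ r → x ∈ q := by
  induction Γ with
  | nil => intro x p hxp; simp at hxp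
  | cons b Γ' ih =>
    obtain ⟨y, s⟩ := b
    intro x p hxp hxr
    simp only [card] at h
    by_cases hy : y ∈ q
    · have hyr : y ∈ r := hqr hy
      simp only [hy, hyr, if_true] at h
      rcases List.mem_cons.mp hxp with heq | hmem
      · cases heq; exact hy
      · exact ih (by omega) x p hmem hxr
    · by_cases hyr : y ∈ r
      · simp only [hy, hyr, if_true, if_false] at h
        have := card_mono Γ' hqr
        omega
      · simp only [hy, hyr, if_false] at h
        rcases List.mem_cons.mp hxp with heq | hmem
        · cases heq; exact absurd hxr hyr
        · exact ih h x p hmem hxr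

lemma step_fix_of (Γ : Env) (q : Qual)
    (h : ∀ x p, (x, p) ∈ Γ → x ∈ stepQ Γ q → x ∈ q) :
    stepQ Γ (stepQ Γ q) = stepQ Γ q := by
  apply Finset.Subset.antisymm _ (subset_stepQ Γ _)
  intro y hy
  rcases Finset.mem_union.mp hy with h1 | h1
  · exact h1
  · obtain ⟨b, hb, hyb⟩ := Finset.mem_biUnion.mp h1
    by_cases hb1 : b.1 ∈ stepQ Γ q
    · have hb1q : b.1 ∈ q := h b.1 b.2 (by simpa using List.mem_toFinset.mp hb) hb1
      simp only [hb1, if_true] at hyb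
      exact Finset.mem_union.mpr (Or.inr (Finset.mem_biUnion.mpr ⟨b, hb, by simp [hb1q, hyb]⟩))
    · simp [hb1] at hyb

lemma qtransN_fix (Γ : Env) {q : Qual} (h : stepQ Γ q = q) : ∀ m, qtransN Γ m q = q := by
  intro m
  induction m with
  | zero => rfl
  | succ m ih => show qtransN Γ m (stepQ Γ q) = q; rw [h]; exact ih

lemma one_le_card (Γ : Env) {x : Var} {p q : Qual} (hmem : (x, p) ∈ Γ) (hx : x ∈ q) :
    1 ≤ card Γ q := by
  induction Γ with
  | nil => simp at hmem
  | cons b Γ' ih =>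
    obtain ⟨y, s⟩ := b
    simp only [card]
    rcases List.mem_cons.mp hmem with heq | hmem'
    · cases heq; simp [hx]
    · by_cases hy : y ∈ q
      · simp [hy]
      · simp [hy]; exact ih hmem'

lemma card_pos_of_ne (Γ : Env) {q : Qual} (h : stepQ Γ q ≠ q) : 1 ≤ card Γ q := by
  by_contra hc
  apply h
  apply Finset.Subset.antisymm _ (subset_stepQ Γ q)
  intro y hy
  rcases Finset.mem_union.mp hy with h1 | h1
  · exact h1
  · obtain ⟨b, hb, hyb⟩ := Finset.mem_biUnion.mp h1
    by_cases hb1 : b.1 ∈ q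
    · exact absurd (one_le_card Γ (p := b.2) (by simpa using List.mem_toFinset.mp hb) hb1) hc
    · simp [hb1] at hyb

lemma all_in_of_card (Γ : Env) {q : Qual} (h : Γ.length ≤ card Γ q) :
    ∀ x p, (x, p) ∈ Γ → x ∈ q := by
  induction Γ with
  | nil => intro x p hxp; simp at hxp
  | cons b Γ' ih =>
    obtain ⟨y, s⟩ := b
    intro x p hxp
    simp only [card, List.length_cons] at h
    by_cases hy : y ∈ q
    · simp only [hy, if_true] at h
      rcases List.mem_cons.mp hxp with heq | hmem
      · cases heq; exact hy
      · exact ih (by omega) x p hmem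
    · simp only [hy, if_false] at h
      have := card_le_length Γ' q
      omega

lemma qtransN_add (Γ : Env) (m k : ℕ) (q : Qual) :
    qtransN Γ (m + k) q = qtransN Γ m (qtransN Γ k q) := by
  induction k generalizing q with
  | zero => rfl
  | succ k ih =>
    show qtransN Γ (m + k) (stepQ Γ q) = qtransN Γ m (qtransN Γ k (stepQ Γ q))
    exact ih (stepQ Γ q)

lemma main_lemma (Γ : Env) : ∀ m q, Γ.length ≤ card Γ q + m →
    stepQ Γ (qtransN Γ m (stepQ Γ q)) = qtransN Γ m (stepQ Γ q) := by
  intro m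
  induction m with
  | zero =>
    intro q h
    show stepQ Γ (stepQ Γ q) = stepQ Γ q
    exact step_fix_of Γ q (fun x p hxp _ => all_in_of_card Γ (by omega) x p hxp)
  | succ m ih =>
    intro q h
    show stepQ Γ (qtransN Γ m (stepQ Γ (stepQ Γ q))) = qtransN Γ m (stepQ Γ (stepQ Γ q))
    by_cases h1 : card Γ (stepQ Γ q) ≤ card Γ q
    · have hfix : stepQ Γ (stepQ Γ q) = stepQ Γ q :=
        step_fix_of Γ q (fun x p hxp hx => mem_of_card_le Γ (subset_stepQ Γ q) h1 x p hxp hx)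
      rw [hfix, qtransN_fix Γ hfix m, hfix]
    · exact ih (stepQ Γ q) (by omega)


/-- Full Transitive Lookup Total. -/
theorem full_trans_lookup_total (Γ : Env) (q : Qual) (n : ℕ) (h : n ≥ Γ.length) :
    qtransN Γ n q = qtransN Γ Γ.length q := by
  have hfix : stepQ Γ (qtransN Γ Γ.length q) = qtransN Γ Γ.length q := by
    by_cases hq : stepQ Γ q = q
    · rw [qtransN_fix Γ hq]; exact hq
    · have hc : 1 ≤ card Γ q := card_pos_of_ne Γ hq
      cases hL : Γ.length with
      | zero =>
        have := card_le_length Γ q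
        omega
      | succ L =>
        have : qtransN Γ (L + 1) q = qtransN Γ L (stepQ Γ q) := rfl
        rw [this]
        exact main_lemma Γ L q (by omega)
  obtain ⟨k, rfl⟩ : ∃ k, n = k + Γ.length := ⟨n - Γ.length, by omega⟩
  rw [qtransN_add, qtransN_fix Γ hfix k]
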